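/- arXiv:1602.04741 — 5 statements merged into one kernel-verified Lean document; each statement's English description precedes it below -/
import Mathlib

section
/- Let $p : A \to [0,1]$ be a probability distribution on a finite set $A$, let $\hat\ell : A \to [0,\infty)$, let $\eta > 0$, and define $p'(i) = p(i)e^{-\eta\hat\ell(i)} / \sum_j p(j)e^{-\eta\hat\ell(j)}$. Then for every $i \in A$, $p'(i) - p(i) \leq \eta\, p'(i) \sum_{j\in A} p(j)\hat\ell(j)$. -/
theorem stmt_1 {A : Type*} [Fintype A] [Nonempty A]
    (p lhat : A → ℝ) (η : ℝ)
    (hp0 : ∀ i, 0 ≤ p i) (hp1 : ∑ i, p i = 1)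
    (hl : ∀ i, 0 ≤ lhat i) (hη : 0 < η) (i : A) :
    (p i * Real.exp (-η * lhat i)) / (∑ j, p j * Real.exp (-η * lhat j)) - p i
      ≤ η * ((p i * Real.exp (-η * lhat i)) / (∑ j, p j * Real.exp (-η * lhat j)))
          * ∑ j, p j * lhat j := by
  set Z := ∑ j, p j * Real.exp (-η * lhat j) with hZ
  have hex : ∃ j, 0 < p j := by
    by_contra h
    push_neg at h
    have : (∑ i, p i) ≤ 0 := Finset.sum_nonpos (fun j _ => h j)
    linarith
  obtain ⟨j0, hj0⟩ := hex
  have hZpos : 0 < Z := by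
    apply Finset.sum_pos' (fun j _ => mul_nonneg (hp0 j) (Real.exp_pos _).le)
    exact ⟨j0, Finset.mem_univ _, mul_pos hj0 (Real.exp_pos _)⟩
  set q := p i * Real.exp (-η * lhat i) / Z with hq
  have hqnn : 0 ≤ q :=
    div_nonneg (mul_nonneg (hp0 i) (Real.exp_pos _).le) hZpos.le
  have hstep1 : q * Z ≤ p i := by
    rw [hq, div_mul_cancel₀ _ hZpos.ne']
    have hle1 : Real.exp (-η * lhat i) ≤ 1 := by
      rw [Real.exp_le_one_iff]
      nlinarith [hl i]
    nlinarith [hp0 i]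
  have hstep2 : 1 - Z ≤ η * ∑ j, p j * lhat j := by
    have h1 : (1:ℝ) - Z = ∑ j, (p j - p j * Real.exp (-η * lhat j)) := by
      rw [Finset.sum_sub_distrib, hp1, hZ]
    rw [h1, Finset.mul_sum]
    apply Finset.sum_le_sum
    intro j _
    have hexp : 1 - η * lhat j ≤ Real.exp (-η * lhat j) := by
      have := Real.add_one_le_exp (-η * lhat j)
      linarith
    nlinarith [hp0 j]
  calc q - p i ≤ q - q * Z := by linarith
    _ = q * (1 - Z) := by ring
    _ ≤ q * (η * ∑ j, p j * lhat j) := mul_le_mul_of_nonneg_left hstep2 hqnn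
    _ = η * q * ∑ j, p j * lhat j := by ring
end

section
/- Let $p : A \to [0,1]$ be a probability distribution on a finite set $A$ with $|A| = K$, suppose $\hat\ell : A \to [0,\infty)$ satisfies $\sum_{i\in A} p(i)\hat\ell(i) \leq Ke$, let $d \geq 1$ be an integer, and let $0 < \eta \leq \frac{1}{Ke(d+1)}$. Define $p'(i) = p(i)e^{-\eta\hat\ell(i)} / \sum_j p(j)e^{-\eta\hat\ell(j)}$. Then $p'(i) \leq (1 + 1/d)\, p(i)$ for every $i \in A$. -/
/-!
Since `1 + x ≤ exp x`, the normaliser `∑ⱼ p j exp (-η ℓ j)` is at least `1 - η ∑ⱼ p j ℓ j`,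
which the budget `η K e ≤ 1 / (d + 1)` bounds below by `d / (d + 1)`; the numerator is at most
`p i` because the losses are nonnegative. Hence `p' i ≤ p i (d + 1) / d`.
-/

open Real Finset

section ExpWeights

variable {ι : Type*} [Fintype ι] {p ℓ : ι → ℝ}

lemma one_sub_mul_sum_le_sum_mul_exp (hp0 : ∀ i, 0 ≤ p i) (hp1 : ∑ i, p i = 1) (η : ℝ) :
    1 - η * ∑ i, p i * ℓ i ≤ ∑ i, p i * exp (-η * ℓ i) :=
  calc 1 - η * ∑ i, p i * ℓ i = ∑ i, (p i + -η * (p i * ℓ i)) := by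
        rw [sum_add_distrib, ← mul_sum, hp1]
        ring
    _ = ∑ i, p i * (-η * ℓ i + 1) := sum_congr rfl fun i _ => by ring
    _ ≤ ∑ i, p i * exp (-η * ℓ i) :=
        sum_le_sum fun i _ => mul_le_mul_of_nonneg_left (add_one_le_exp _) (hp0 i)

lemma mul_exp_div_sum_le_div_one_sub (hp0 : ∀ i, 0 ≤ p i) (hp1 : ∑ i, p i = 1)
    (hℓ : ∀ i, 0 ≤ ℓ i) {η : ℝ} (hη : 0 ≤ η) (hlt : η * ∑ j, p j * ℓ j < 1) (i : ι) :
    p i * exp (-η * ℓ i) / ∑ j, p j * exp (-η * ℓ j) ≤ p i / (1 - η * ∑ j, p j * ℓ j) := by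
  have hexp : exp (-η * ℓ i) ≤ 1 := by
    rw [neg_mul, exp_le_one_iff, neg_nonpos]
    exact mul_nonneg hη (hℓ i)
  exact div_le_div₀ (hp0 i) (mul_le_of_le_one_right (hp0 i) hexp) (sub_pos.2 hlt)
    (one_sub_mul_sum_le_sum_mul_exp hp0 hp1 η)

end ExpWeights

theorem stmt_2_general {A : Type*} [Fintype A]
    (p lhat : A → ℝ) (η : ℝ) (d : ℕ) (K : ℕ)
    (hp0 : ∀ i, 0 ≤ p i) (hp1 : ∑ i, p i = 1)
    (hl : ∀ i, 0 ≤ lhat i)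
    (hsum : ∑ i, p i * lhat i ≤ K * Real.exp 1)
    (hd : 1 ≤ d)
    (hη0 : 0 < η) (hη : η ≤ 1 / (K * Real.exp 1 * (d + 1))) (i : A) :
    (p i * Real.exp (-η * lhat i)) / (∑ j, p j * Real.exp (-η * lhat j))
      ≤ (1 + 1 / (d : ℝ)) * p i := by
  have hd' : (1 : ℝ) ≤ d := by exact_mod_cast hd
  -- `K = 0` would make the right side of `hη` a junk `1 / 0 = 0`, contradicting `0 < η`.
  have hK0 : 0 < (K : ℝ) := by
    rcases Nat.eq_zero_or_pos K with h | h
    · simp only [h, Nat.cast_zero, zero_mul, div_zero] at hη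
      linarith
    · exact_mod_cast h
  have hloss : η * ∑ j, p j * lhat j ≤ 1 / (d + 1) :=
    calc η * ∑ j, p j * lhat j ≤ η * (K * exp 1) := mul_le_mul_of_nonneg_left hsum hη0.le
      _ ≤ 1 / (d + 1) := by
        rw [le_div_iff₀ (by positivity)] at hη ⊢
        linarith
  have hd1 : 1 / ((d : ℝ) + 1) < 1 := by rw [div_lt_one (by positivity)]; linarith
  calc _ ≤ p i / (1 - η * ∑ j, p j * lhat j) :=
        mul_exp_div_sum_le_div_one_sub hp0 hp1 hl hη0.le (hloss.trans_lt hd1) i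
    _ ≤ p i / (1 - 1 / (d + 1)) := by
        gcongr
        exact hp0 i
    _ = (1 + 1 / (d : ℝ)) * p i := by
        rw [one_sub_div (by positivity), add_sub_cancel_right]
        field_simp

theorem stmt_2 {A : Type*} [Fintype A] [Nonempty A]
    (p lhat : A → ℝ) (η : ℝ) (d : ℕ) (K : ℕ)
    (hK : K = Fintype.card A)
    (hp0 : ∀ i, 0 ≤ p i) (hp1 : ∑ i, p i = 1)
    (hl : ∀ i, 0 ≤ lhat i)
    (hsum : ∑ i, p i * lhat i ≤ K * Real.exp 1)
    (hd : 1 ≤ d)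
    (hη0 : 0 < η) (hη : η ≤ 1 / (K * Real.exp 1 * (d + 1))) (i : A) :
    (p i * Real.exp (-η * lhat i)) / (∑ j, p j * Real.exp (-η * lhat j))
      ≤ (1 + 1 / (d : ℝ)) * p i :=
  stmt_2_general p lhat η d K hp0 hp1 hl hsum hd hη0 hη i
end

section
/- Let $G = (V, E)$ be a finite undirected graph with independence number $\alpha(G)$. For each $v \in V$ let $N_{\leq 1}(v)$ denote the closed neighborhood of $v$ (neighbors of $v$ together with $v$ itself), and let $p : V \to [0,1]$ be arbitrary. Define $P(v) = \sum_{v' \in N_{\leq 1}(v)} p(v')$ and $q(v) = 1 - \prod_{v' \in N_{\leq 1}(v)} (1 - p(v'))$. Suppose $p(v) > 0$ for all $v$ (so that $q(v) > 0$). Then $\sum_{v \in V} \frac{p(v)}{q(v)} \leq \frac{1}{1 - e^{-1}} \left( \alpha(G) + \sum_{v \in V} p(v) \right)$, provided that $\sum_{v \in V} p(v)/P(v) \leq \alpha(G)$. -/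
/-- A finset of vertices is independent: no two distinct members are adjacent. -/
def IsIndepSet {V : Type*} (G : SimpleGraph V) (s : Finset V) : Prop :=
  ∀ u ∈ s, ∀ v ∈ s, u ≠ v → ¬ G.Adj u v

/-- The independence number of a finite graph. -/
noncomputable def indepNum (V : Type*) [Fintype V] [DecidableEq V] (G : SimpleGraph V) : ℕ :=
  sSup {n : ℕ | ∃ s : Finset V, IsIndepSet G s ∧ s.card = n}

theorem stmt_6 {V : Type*} [Fintype V] [DecidableEq V] (G : SimpleGraph V) [DecidableRel G.Adj]
    (p : V → ℝ) (hp : ∀ v, 0 < p v) (hp1 : ∀ v, p v ≤ 1)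
    (P q : V → ℝ)
    (hP : ∀ v, P v = ∑ v' ∈ insert v (G.neighborFinset v), p v')
    (hq : ∀ v, q v = 1 - ∏ v' ∈ insert v (G.neighborFinset v), (1 - p v'))
    (halon : ∑ v, p v / P v ≤ (indepNum V G : ℝ)) :
    ∑ v, p v / q v ≤ (1 - Real.exp (-1))⁻¹ * ((indepNum V G : ℝ) + ∑ v, p v) := by
  have he : Real.exp (-1) < 1 := by
    rw [Real.exp_lt_one_iff]; norm_num
  have hc : (0:ℝ) < 1 - Real.exp (-1) := by linarith
  have hPpos : ∀ v, 0 < P v := by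
    intro v
    rw [hP v]
    exact Finset.sum_pos (fun i _ => hp i) ⟨v, Finset.mem_insert_self _ _⟩
  have hprod : ∀ v, ∏ v' ∈ insert v (G.neighborFinset v), (1 - p v') ≤ Real.exp (-(P v)) := by
    intro v
    calc ∏ v' ∈ insert v (G.neighborFinset v), (1 - p v')
        ≤ ∏ v' ∈ insert v (G.neighborFinset v), Real.exp (-(p v')) :=
          Finset.prod_le_prod (fun i _ => by linarith [hp1 i])
            (fun i _ => by nlinarith [Real.add_one_le_exp (-(p i))])
      _ = Real.exp (∑ v' ∈ insert v (G.neighborFinset v), -(p v')) :=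
          (Real.exp_sum _ _).symm
      _ = Real.exp (-(P v)) := by rw [hP v, Finset.sum_neg_distrib]
  have hB : ∀ x : ℝ, 0 ≤ x → x ≤ 1 → Real.exp (-x) ≤ 1 - (1 - Real.exp (-1)) * x := by
    intro x h0 h1
    have h := convexOn_exp.2 (Set.mem_univ (0:ℝ)) (Set.mem_univ (-1:ℝ))
      (by linarith : (0:ℝ) ≤ 1 - x) h0 (by ring)
    simp only [smul_eq_mul, Real.exp_zero] at h
    have heq : (1 - x) * 0 + x * (-1) = -x := by ring
    rw [heq] at h
    nlinarith
  have key : ∀ v, p v / q v ≤ (1 - Real.exp (-1))⁻¹ * (p v / P v + p v) := by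
    intro v
    by_cases hcase : 1 ≤ P v
    · have hmono : Real.exp (-(P v)) ≤ Real.exp (-1) := Real.exp_le_exp.2 (by linarith)
      have hqge : 1 - Real.exp (-1) ≤ q v := by
        rw [hq v]; linarith [hprod v]
      have hqpos : 0 < q v := lt_of_lt_of_le hc hqge
      have h1 : p v / q v ≤ p v / (1 - Real.exp (-1)) :=
        div_le_div_of_nonneg_left (hp v).le hc hqge
      have h2 : 0 ≤ p v / P v := div_nonneg (hp v).le (hPpos v).le
      calc p v / q v ≤ p v / (1 - Real.exp (-1)) := h1
        _ = (1 - Real.exp (-1))⁻¹ * p v := div_eq_inv_mul _ _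
        _ ≤ (1 - Real.exp (-1))⁻¹ * (p v / P v + p v) := by
            apply mul_le_mul_of_nonneg_left (by linarith) (by positivity)
    · have hxle : P v ≤ 1 := le_of_not_ge hcase
      have hqge : (1 - Real.exp (-1)) * P v ≤ q v := by
        have h1 := hprod v
        have h2 := hB (P v) (hPpos v).le hxle
        rw [hq v]; linarith
      have hden : 0 < (1 - Real.exp (-1)) * P v := mul_pos hc (hPpos v)
      have hqpos : 0 < q v := lt_of_lt_of_le hden hqge
      have h1 : p v / q v ≤ p v / ((1 - Real.exp (-1)) * P v) :=
        div_le_div_of_nonneg_left (hp v).le hden hqge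
      have h2 : p v / ((1 - Real.exp (-1)) * P v) = (1 - Real.exp (-1))⁻¹ * (p v / P v) := by
        field_simp
      calc p v / q v ≤ (1 - Real.exp (-1))⁻¹ * (p v / P v) := by rw [← h2]; exact h1
        _ ≤ (1 - Real.exp (-1))⁻¹ * (p v / P v + p v) := by
            apply mul_le_mul_of_nonneg_left (by linarith [hp v]) (by positivity)
  calc ∑ v, p v / q v ≤ ∑ v, (1 - Real.exp (-1))⁻¹ * (p v / P v + p v) :=
        Finset.sum_le_sum (fun v _ => key v)
    _ = (1 - Real.exp (-1))⁻¹ * (∑ v, p v / P v + ∑ v, p v) := by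
        rw [← Finset.mul_sum, Finset.sum_add_distrib]
    _ ≤ (1 - Real.exp (-1))⁻¹ * ((indepNum V G : ℝ) + ∑ v, p v) := by
        apply mul_le_mul_of_nonneg_left (by linarith) (by positivity)
end

section
/- Let $A$ be a finite set, $p$ a probability distribution on $A$, $\hat\ell : A \to [0,\infty)$, $\eta > 0$, $\delta > 0$, and $K = |A|$. Define $w'(i) = p(i)e^{-\eta\hat\ell(i)}$, $W' = \sum_j w'(j)$, $\tilde p'(i) = \max\{ w'(i)/W', \delta/K \}$, $\tilde P' = \sum_j \tilde p'(j)$ and $p'(i) = \tilde p'(i)/\tilde P'$. Then for all $i \in A$: $p'(i) - p(i) \geq -p(i)\,(\eta\hat\ell(i) + \delta)$. -/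
theorem stmt_12 {A : Type*} [Fintype A] [Nonempty A]
    (K : ℕ) (hK : K = Fintype.card A)
    (p lhat : A → ℝ) (η δ : ℝ)
    (hp0 : ∀ i, 0 ≤ p i) (hp1 : ∑ i, p i = 1)
    (hl : ∀ i, 0 ≤ lhat i) (hη : 0 < η) (hδ : 0 < δ)
    (w' ptil' : A → ℝ) (p' : A → ℝ)
    (hw' : ∀ i, w' i = p i * Real.exp (-η * lhat i))
    (hptil' : ∀ i, ptil' i = max (w' i / ∑ j, w' j) (δ / K))
    (hp' : ∀ i, p' i = ptil' i / ∑ j, ptil' j) (i : A) :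
    p' i - p i ≥ -(p i * (η * lhat i + δ)) := by
  set W := ∑ j, w' j with hW
  set P := ∑ j, ptil' j with hP
  have hK0 : (0:ℝ) < K := by
    rw [hK]; exact_mod_cast Fintype.card_pos
  have hwnn : ∀ j, 0 ≤ w' j := fun j => by
    rw [hw']; exact mul_nonneg (hp0 j) (Real.exp_pos _).le
  have hWpos : 0 < W := by
    obtain ⟨j, hj⟩ : ∃ j, 0 < p j := by
      by_contra h
      push_neg at h
      have : ∑ i, p i ≤ 0 := Finset.sum_nonpos (fun i _ => h i)
      linarith
    have hwj : 0 < w' j := by rw [hw']; positivity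
    exact lt_of_lt_of_le hwj
      (Finset.single_le_sum (fun k _ => hwnn k) (Finset.mem_univ j))
  have hW1 : W ≤ 1 := by
    rw [hW, ← hp1]
    apply Finset.sum_le_sum
    intro j _
    rw [hw' j]
    nth_rewrite 2 [← mul_one (p j)]
    apply mul_le_mul_of_nonneg_left _ (hp0 j)
    have : -η * lhat j ≤ 0 := by nlinarith [hl j]
    exact Real.exp_le_one_iff.mpr this
  have hsumq : ∑ j, w' j / W = 1 := by
    rw [← Finset.sum_div, ← hW, div_self hWpos.ne']
  have hmaxle : ∀ j, w' j / W ≤ ptil' j := fun j => by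
    rw [hptil']; exact le_max_left _ _
  have hP1 : 1 ≤ P := by
    rw [hP, ← hsumq]
    exact Finset.sum_le_sum fun j _ => hmaxle j
  have hPpos : 0 < P := lt_of_lt_of_le one_pos hP1
  have hPle : P ≤ 1 + δ := by
    have h1 : ∑ j : A, (w' j / W + δ / K) = 1 + δ := by
      rw [Finset.sum_add_distrib, hsumq, Finset.sum_const, Finset.card_univ, ← hK,
        nsmul_eq_mul, mul_div_cancel₀ _ hK0.ne']
    rw [hP, ← h1]
    apply Finset.sum_le_sum
    intro j _
    rw [hptil']
    have h2 : 0 ≤ w' j / W := div_nonneg (hwnn j) hWpos.le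
    have h3 : 0 ≤ δ / K := by positivity
    exact max_le (le_add_of_nonneg_right h3) (le_add_of_nonneg_left h2)
  set x := η * lhat i with hxdef
  have hx0 : 0 ≤ x := mul_nonneg hη.le (hl i)
  have hexp : 1 - x ≤ Real.exp (-x) := by
    nlinarith [Real.add_one_le_exp (-x)]
  have hw1 : p i * (1 - x) ≤ w' i := by
    rw [hw' i]
    exact mul_le_mul_of_nonneg_left (by rw [neg_mul]; exact hexp) (hp0 i)
  have hw2 : w' i ≤ w' i / W := by
    rw [le_div_iff₀ hWpos]
    nlinarith [hwnn i]
  have hmain : p i * (1 - x) ≤ p' i * P := by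
    have : p' i * P = ptil' i := by
      rw [hp' i, div_mul_cancel₀ _ hPpos.ne']
    rw [this]
    exact le_trans hw1 (le_trans hw2 (hmaxle i))
  nlinarith [hmain, hPpos, mul_nonneg (mul_nonneg (hp0 i) hx0) (sub_nonneg.mpr hP1),
    mul_nonneg (mul_nonneg (hp0 i) hδ.le) (sub_nonneg.mpr hP1),
    mul_nonneg (hp0 i) (sub_nonneg.mpr hPle)]
end

section
/- Let $A$ be a finite set, $p$ a probability distribution on $A$, $\hat\ell : A \to [0,\infty)$, $\eta > 0$, $\delta > 0$, $K = |A|$. With the clipped update $w'(i) = p(i)e^{-\eta\hat\ell(i)}$, $W' = \sum_j w'(j)$, $\tilde p'(i) = \max\{w'(i)/W', \delta/K\}$, $\tilde P' = \sum_j \tilde p'(j)$, $p'(i) = \tilde p'(i)/\tilde P'$, it holds for every $i$ with $\tilde p'(i) > \delta/K$ that $p'(i) - p(i) \leq p'(i) \sum_{j \in A} p(j)\left(1 - (1 - \eta\hat\ell(j))\right) = \eta\, p'(i) \sum_{j\in A} p(j)\hat\ell(j)$. -/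
theorem stmt_19 {A : Type*} [Fintype A] [Nonempty A]
    (K : ℕ) (hK : K = Fintype.card A)
    (p lhat : A → ℝ) (η δ : ℝ)
    (hp0 : ∀ i, 0 ≤ p i) (hp1 : ∑ i, p i = 1)
    (hl : ∀ i, 0 ≤ lhat i) (hη : 0 < η) (hδ : 0 < δ)
    (w' ptil' p' : A → ℝ)
    (hw' : ∀ i, w' i = p i * Real.exp (-η * lhat i))
    (hptil' : ∀ i, ptil' i = max (w' i / ∑ j, w' j) (δ / K))
    (hp' : ∀ i, p' i = ptil' i / ∑ j, ptil' j)
    (i : A) (hi : δ / K < ptil' i) :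
    p' i - p i ≤ η * p' i * ∑ j, p j * lhat j := by
  set W : ℝ := ∑ j, w' j with hW
  set S : ℝ := ∑ j, p j * lhat j with hS
  have hw0 : ∀ j, 0 ≤ w' j := fun j => by
    rw [hw' j]; exact mul_nonneg (hp0 j) (Real.exp_pos _).le
  have hWpos : 0 < W := by
    have : (0:ℝ) < ∑ j, w' j := by
      apply Finset.sum_pos' (fun j _ => hw0 j)
      obtain ⟨j, hj⟩ : ∃ j, 0 < p j := by
        by_contra h
        push_neg at h
        have : ∑ j, p j = 0 := Finset.sum_eq_zero (fun j _ => le_antisymm (h j) (hp0 j))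
        simp [this] at hp1
      exact ⟨j, Finset.mem_univ j, by rw [hw' j]; positivity⟩
    exact this
  have hmax : ptil' i = w' i / W := by
    rw [hptil' i] at hi ⊢
    rcases max_cases (w' i / W) (δ / K) with ⟨h1, _⟩ | ⟨h1, _⟩
    · exact h1
    · rw [h1] at hi; exact absurd hi (lt_irrefl _)
  have hP1 : (1:ℝ) ≤ ∑ j, ptil' j := by
    have : ∑ j, w' j / W ≤ ∑ j, ptil' j :=
      Finset.sum_le_sum (fun j _ => (hptil' j) ▸ le_max_left _ _)
    rwa [← Finset.sum_div, div_self hWpos.ne'] at this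
  have hptilnn : 0 ≤ ptil' i := by
    rw [hmax]; exact div_nonneg (hw0 i) hWpos.le
  have hp'le : p' i ≤ w' i / W := by
    rw [hp' i, ← hmax]
    calc ptil' i / ∑ j, ptil' j ≤ ptil' i / 1 :=
          div_le_div_of_nonneg_left hptilnn one_pos hP1
      _ = ptil' i := div_one _
  have hp'nn : 0 ≤ p' i := by
    rw [hp' i]
    exact div_nonneg hptilnn (le_trans one_pos.le hP1)
  have hkey : p' i * W ≤ p i := by
    have h1 : p' i * W ≤ w' i := by
      have := mul_le_mul_of_nonneg_right hp'le hWpos.le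
      rwa [div_mul_cancel₀ _ hWpos.ne'] at this
    refine h1.trans ?_
    rw [hw' i]
    nlinarith [Real.exp_zero ▸ Real.exp_le_exp.mpr (show -η * lhat i ≤ 0 by nlinarith [hl i]), hp0 i]
  have hWlb : 1 - η * S ≤ W := by
    have : ∑ j, p j * (1 - η * lhat j) ≤ ∑ j, w' j := by
      apply Finset.sum_le_sum
      intro j _
      rw [hw' j]
      have h2 := Real.add_one_le_exp (-η * lhat j)
      nlinarith [hp0 j]
    calc 1 - η * S = ∑ j, p j * (1 - η * lhat j) := by
          simp only [mul_sub, mul_one, Finset.sum_sub_distrib, hp1, hS,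
            Finset.mul_sum, mul_left_comm]
      _ ≤ W := this
  nlinarith [mul_le_mul_of_nonneg_left hWlb hp'nn]
end
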